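/- Every principal ideal domain of stable rank 1 is a Euclidean domain. -/

import Mathlib

/-!
Take `ν x` to be the number of prime factors of `x`, counted with multiplicity. If `b ∤ a`, write
`a = d a'`, `b = d b'` with `d` a generator of `(a, b)`; then `a'` and `b'` are coprime, so stable
rank 1 gives `c` with `a' + c b'` a unit. The remainder `r = a + c b` is then an associate of `d`,
a proper divisor of `b`, hence has fewer prime factors than `b`.
-/

open UniqueFactorizationMonoid

def StableRankOne (R : Type*) [CommRing R] : Prop :=
  ∀ a b : R, IsCoprime a b → ∃ c : R, IsUnit (a + c * b)

theorem card_factors_lt_of_dvdNotUnit {α : Type*} [CommMonoidWithZero α]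
    [UniqueFactorizationMonoid α] {a b : α} (h : DvdNotUnit a b) (hb : b ≠ 0) :
    (factors a).card < (factors b).card := by
  obtain ⟨ha, c, hc, rfl⟩ := h
  have hc0 : c ≠ 0 := right_ne_zero_of_mul hb
  rw [Multiset.card_eq_card_of_rel (factors_mul ha hc0), Multiset.card_add,
    Nat.lt_add_right_iff_pos, Multiset.card_pos, ← Multiset.bot_eq_zero, ← bot_lt_iff_ne_bot]
  exact (factors_pos hc0).mpr hc

theorem StableRankOne.exists_span_add_mul_eq_span_pair {R : Type*} [CommRing R] [IsDomain R]
    [IsBezout R] (hR : StableRankOne R) (a b : R) :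
    ∃ c : R, Ideal.span {a + c * b} = Ideal.span {a, b} := by
  obtain ⟨a', ha⟩ := IsBezout.gcd_dvd_left a b
  obtain ⟨b', hb⟩ := IsBezout.gcd_dvd_right a b
  set d := IsBezout.gcd a b
  obtain hd | hd := eq_or_ne d 0
  · simp [ha, hb, hd]
  obtain ⟨x, y, hxy⟩ := IsBezout.gcd_eq_sum a b
  have hcop : IsCoprime a' b' :=
    ⟨x, y, mul_left_cancel₀ hd (by linear_combination -(x * ha) - y * hb + hxy)⟩
  obtain ⟨c, hc⟩ := hR a' b' hcop
  refine ⟨c, ?_⟩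
  rw [← IsBezout.span_gcd, Ideal.span_singleton_eq_span_singleton]
  have hr : a + c * b = d * (a' + c * b') := by rw [ha, hb]; ring
  rw [hr]
  exact (associated_mul_unit_right d _ hc).symm

/-- Estes–Ohm: every principal ideal domain of stable rank 1 is a Euclidean domain. -/
theorem pid_stableRankOne_euclidean (R : Type*) [CommRing R] [IsDomain R]
    [IsPrincipalIdealRing R]
    (hsr1 : ∀ a b : R, (∃ x y : R, x * a + y * b = 1) → ∃ c : R, IsUnit (a + c * b)) :
    ∃ ν : R → ℕ, ∀ a b : R, b ≠ 0 →
      ∃ q r : R, a = b * q + r ∧ (r = 0 ∨ ν r < ν b) := by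
  have hR : StableRankOne R := hsr1
  refine ⟨fun x ↦ (factors x).card, fun a b hb ↦ ?_⟩
  by_cases hba : b ∣ a
  · obtain ⟨q, rfl⟩ := hba
    exact ⟨q, 0, (add_zero _).symm, Or.inl rfl⟩
  obtain ⟨c, hc⟩ := hR.exists_span_add_mul_eq_span_pair a b
  refine ⟨-c, a + c * b, by ring, Or.inr (card_factors_lt_of_dvdNotUnit ?_ hb)⟩
  have hrb : a + c * b ∣ b := Ideal.mem_span_singleton.mp (hc ▸ Ideal.subset_span (by simp))
  exact dvdNotUnit_of_dvd_of_not_dvd hrb fun hbr ↦ hba ((dvd_add_left (dvd_mul_left b c)).mp hbr)
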